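/- arXiv:1704.04849 — 9 statements merged into one kernel-verified Lean document; each statement's English description precedes it below -/
import Mathlib

section
/- For any injective sequence r(1),...,r(B) of distinct indices from {1,...,N} with B < N, and positive reals λ_1,...,λ_N with Λ = Σ_{n=1}^N λ_n, the following identity holds: 1 = ∏_{k=3}^{B+1} (Λ - Σ_{i=1}^{k-1} λ_{r(i)})/(Λ - Σ_{i=2}^{k-1} λ_{r(i)}) + Σ_{j=2}^B [∏_{k=3}^{j} (Λ - Σ_{i=1}^{k-1} λ_{r(i)})/(Λ - Σ_{i=2}^{k-1} λ_{r(i)})] · λ_{r(1)}/(Λ - Σ_{i=2}^{j} λ_{r(i)}), where empty products equal 1 and empty sums equal 0. -/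
open Finset

/-!
Write `f k` for the `k`-th factor of the product. Since `Λ - ∑_{i=2}^{j} λ_{r i}` exceeds
`Λ - ∑_{i=1}^{j} λ_{r i}` by exactly `λ_{r 1}`, the `j`-th summand is `P j * (1 - f (j + 1))`
with `P j = ∏_{k=3}^{j} f k`, i.e. `P j - P (j + 1)`. The sum therefore telescopes to
`1 - P (B + 1)`. Injectivity of `r` keeps the denominators positive: the weights `λ_{r i}`,
`2 ≤ i ≤ j`, miss `λ_{r 1}` and so sum to less than `Λ`.
-/

theorem Finset.prod_Icc_add_sum_prod_Icc_mul_one_sub {R : Type*} [CommRing R] (f : ℕ → R)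
    (m n : ℕ) :
    ∏ k ∈ Icc (m + 1) (n + 1), f k + ∑ j ∈ Icc m n, (∏ k ∈ Icc (m + 1) j, f k) * (1 - f (j + 1))
      = 1 := by
  induction n with
  | zero => rcases m with _ | m <;> simp
  | succ n ih =>
    by_cases hmn : m ≤ n + 1
    · rw [prod_Icc_succ_top (by omega), sum_Icc_succ_top hmn]
      linear_combination ih
    · rw [Icc_eq_empty (by omega), Icc_eq_empty hmn, prod_empty, sum_empty, add_zero]

theorem Finset.sum_comp_lt_sum_univ_of_injOn {ι α M : Type*} [Fintype α] [DecidableEq α]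
    [AddCommMonoid M] [PartialOrder M] [IsOrderedCancelAddMonoid M]
    {s : Finset ι} {r : ι → α} (hr : Set.InjOn r s) {w : α → M} (hw : ∀ a, 0 ≤ w a)
    {a : α} (ha : a ∉ s.image r) (hwa : 0 < w a) :
    ∑ i ∈ s, w (r i) < ∑ b, w b := by
  rw [← sum_image hr]
  exact sum_lt_sum_of_subset (subset_univ _) (mem_univ a) ha hwa fun b _ _ => hw b

theorem lru_balance_identity_general (N B : ℕ)
    (lam : Fin N → ℝ) (hlam : ∀ n, 0 < lam n)
    (Λ : ℝ) (hΛ : Λ = ∑ n, lam n)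
    (r : ℕ → Fin N) (hr : Set.InjOn r (Set.Icc 1 B)) :
    (1 : ℝ) =
      (∏ k ∈ Finset.Icc 3 (B + 1),
        (Λ - ∑ i ∈ Finset.Icc 1 (k - 1), lam (r i)) /
          (Λ - ∑ i ∈ Finset.Icc 2 (k - 1), lam (r i)))
      + ∑ j ∈ Finset.Icc 2 B,
          (∏ k ∈ Finset.Icc 3 j,
            (Λ - ∑ i ∈ Finset.Icc 1 (k - 1), lam (r i)) /
              (Λ - ∑ i ∈ Finset.Icc 2 (k - 1), lam (r i))) *
            (lam (r 1) / (Λ - ∑ i ∈ Finset.Icc 2 j, lam (r i))) := by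
  have hden : ∀ j ≤ B, 0 < Λ - ∑ i ∈ Icc 2 j, lam (r i) := by
    intro j hj
    have hinj : Set.InjOn r (Icc 2 j) :=
      hr.mono fun i hi => by simp only [coe_Icc, Set.mem_Icc] at hi ⊢; omega
    have hr1 : r 1 ∉ (Icc 2 j).image r := by
      simp only [mem_image, mem_Icc, not_exists, not_and]
      intro i hi heq
      have := hr (by simp only [Set.mem_Icc]; omega) (by simp only [Set.mem_Icc]; omega) heq
      omega
    rw [hΛ, sub_pos]
    exact sum_comp_lt_sum_univ_of_injOn hinj (fun n => (hlam n).le) hr1 (hlam _)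
  have hsummand : ∀ j ∈ Icc 2 B, lam (r 1) / (Λ - ∑ i ∈ Icc 2 j, lam (r i)) =
      1 - (Λ - ∑ i ∈ Icc 1 (j + 1 - 1), lam (r i)) / (Λ - ∑ i ∈ Icc 2 (j + 1 - 1), lam (r i)) := by
    intro j hj
    rw [mem_Icc] at hj
    have hsplit : ∑ i ∈ Icc 1 j, lam (r i) = lam (r 1) + ∑ i ∈ Icc 2 j, lam (r i) := by
      rw [← insert_Icc_add_one_left_eq_Icc (by omega : 1 ≤ j)]
      exact sum_insert (by simp)
    rw [Nat.add_sub_cancel, hsplit, one_sub_div (hden j hj.2).ne']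
    congr 1
    ring
  rw [sum_congr rfl fun j hj => by rw [hsummand j hj]]
  exact (prod_Icc_add_sum_prod_Icc_mul_one_sub _ 2 B).symm

/-- Key identity verifying the full balance equations for the LRU invariant:
law of total probability for the position at which object `r 1` enters the cache. -/
theorem lru_balance_identity (N B : ℕ) (hN : 2 ≤ N) (hB : 1 ≤ B) (hBN : B < N)
    (lam : Fin N → ℝ) (hlam : ∀ n, 0 < lam n)
    (Λ : ℝ) (hΛ : Λ = ∑ n, lam n)
    (r : ℕ → Fin N) (hr : Set.InjOn r (Set.Icc 1 B)) :
    (1 : ℝ) =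
      (∏ k ∈ Finset.Icc 3 (B + 1),
        (Λ - ∑ i ∈ Finset.Icc 1 (k - 1), lam (r i)) /
          (Λ - ∑ i ∈ Finset.Icc 2 (k - 1), lam (r i)))
      + ∑ j ∈ Finset.Icc 2 B,
          (∏ k ∈ Finset.Icc 3 j,
            (Λ - ∑ i ∈ Finset.Icc 1 (k - 1), lam (r i)) /
              (Λ - ∑ i ∈ Finset.Icc 2 (k - 1), lam (r i))) *
            (lam (r 1) / (Λ - ∑ i ∈ Finset.Icc 2 j, lam (r i))) :=
  lru_balance_identity_general N B lam hlam Λ hΛ r hr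
end

section
/- The LRU invariant candidate π(r) = ∏_{k=1}^B λ_{r(k)}/(Λ - Σ_{i=1}^{k-1} λ_{r(i)}) defines a probability distribution on the set of B-permutations of {1,...,N}: it is nonnegative and sums to 1 over all injective sequences r of length B from {1,...,N}. -/
open Finset

/-! Summing `piLRU` over the last entry `a` of the sequence peels off one factor
`lam a / (Λ - Σ_{i<B} lam (r i))`. The denominator is exactly the total weight of the values
not yet used, so these factors sum to `1` over the admissible `a`, and induction on `B` finishes. -/

/-- The LRU invariant candidate, for a cache state given by an injective
`r : Fin B → Fin N` (0-based ranks). -/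
noncomputable def piLRU (N B : ℕ) (lam : Fin N → ℝ) (r : Fin B → Fin N) : ℝ :=
  ∏ k : Fin B,
    lam (r k) / ((∑ n, lam n) - ∑ i ∈ Finset.univ.filter (fun i : Fin B => i < k), lam (r i))

namespace Fin.Embedding

def snocEquiv (n : ℕ) (α : Type*) :
    (Fin (n + 1) ↪ α) ≃ Σ e : Fin n ↪ α, {a // a ∉ Set.range e} where
  toFun x := ⟨init x, x (last n), by
    rintro ⟨i, hi⟩
    exact (castSucc_lt_last i).ne (x.injective hi)⟩
  invFun p := snoc p.1 p.2.2
  left_inv x := DFunLike.ext' (Fin.snoc_init_self x)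
  right_inv p := by
    obtain ⟨e, a, ha⟩ := p
    exact Sigma.subtype_ext (init_snoc e ha) snoc_last

theorem sum_eq_sum_sum_snoc {α : Type*} [Fintype α] [DecidableEq α] {M : Type*} [AddCommMonoid M] {n : ℕ}
    (f : (Fin (n + 1) ↪ α) → M) :
    ∑ x, f x = ∑ e : Fin n ↪ α, ∑ a : {a // a ∉ Set.range e}, f (snoc e a.2) := by
  rw [Fintype.sum_equiv (snocEquiv n α) f (fun p => f (snoc p.1 p.2.2))
    fun x => congrArg f ((snocEquiv n α).left_inv x).symm, Fintype.sum_sigma]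

end Fin.Embedding

section piLRU

variable {N : ℕ} (lam : Fin N → ℝ)

theorem sum_sub_sum_embedding_eq_sum_compl {B : ℕ} (r : Fin B ↪ Fin N) (s : Finset (Fin B)) :
    (∑ n, lam n) - ∑ i ∈ s, lam (r i) = ∑ n ∈ (s.map r)ᶜ, lam n := by
  rw [← sum_add_sum_compl (s.map r) lam, sum_map, add_sub_cancel_left]

theorem piLRU_nonneg (hlam : ∀ n, 0 ≤ lam n) {B : ℕ} (r : Fin B ↪ Fin N) :
    0 ≤ piLRU N B lam r :=
  prod_nonneg fun k _ => div_nonneg (hlam _) <| by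
    rw [sum_sub_sum_embedding_eq_sum_compl]
    exact sum_nonneg fun n _ => hlam n

theorem piLRU_snoc {B : ℕ} (r : Fin B → Fin N) (a : Fin N) :
    piLRU N (B + 1) lam (Fin.snoc r a) =
      piLRU N B lam r * (lam a / ((∑ n, lam n) - ∑ i, lam (r i))) := by
  unfold piLRU
  rw [Fin.prod_univ_castSucc]
  congr 1
  · refine prod_congr rfl fun k _ => ?_
    rw [Fin.snoc_castSucc, sum_filter, sum_filter, Fin.sum_univ_castSucc]
    simp [Fin.castSucc_lt_castSucc_iff, (Fin.castSucc_lt_last k).not_gt]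
  · rw [Fin.snoc_last, sum_filter, Fin.sum_univ_castSucc]
    simp [Fin.castSucc_lt_last]

theorem sum_div_sub_sum_range_eq_one (hlam : ∀ n, 0 < lam n) {B : ℕ} (hBN : B < N)
    (r : Fin B ↪ Fin N) :
    ∑ a : {a // a ∉ Set.range r}, lam a / ((∑ n, lam n) - ∑ i, lam (r i)) = 1 := by
  have hrange : ∀ a, a ∈ (univ.map r)ᶜ ↔ a ∉ Set.range r := by simp
  have hfree : ((univ.map r)ᶜ).Nonempty := by
    rw [← card_pos, card_compl, card_map]
    simpa using hBN
  rw [← sum_subtype _ hrange (fun a => lam a / _), ← sum_div, sum_sub_sum_embedding_eq_sum_compl,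
    div_self (sum_pos (fun n _ => hlam n) hfree).ne']

theorem sum_piLRU_eq_one (hlam : ∀ n, 0 < lam n) {B : ℕ} (hBN : B ≤ N) :
    ∑ r : Fin B ↪ Fin N, piLRU N B lam r = 1 := by
  induction B with
  | zero => simp [piLRU]
  | succ B ih =>
    calc ∑ r : Fin (B + 1) ↪ Fin N, piLRU N (B + 1) lam r
        = ∑ r : Fin B ↪ Fin N, piLRU N B lam r *
            ∑ a : {a // a ∉ Set.range r}, lam a / ((∑ n, lam n) - ∑ i, lam (r i)) := by
          simp only [Fin.Embedding.sum_eq_sum_sum_snoc, Fin.Embedding.coe_snoc, piLRU_snoc, mul_sum]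
      _ = 1 := by
          simp only [sum_div_sub_sum_range_eq_one lam hlam hBN, mul_one]
          exact ih (Nat.le_of_succ_le hBN)

end piLRU

theorem piLRU_prob_general (N B : ℕ) (hBN : B ≤ N)
    (lam : Fin N → ℝ) (hlam : ∀ n, 0 < lam n) :
    (∀ r : Fin B ↪ Fin N, 0 ≤ piLRU N B lam r) ∧
      (∑ r : Fin B ↪ Fin N, piLRU N B lam r) = 1 :=
  ⟨piLRU_nonneg lam fun n => (hlam n).le, sum_piLRU_eq_one lam hlam hBN⟩

/-- The LRU invariant candidate is a probability distribution on B-permutations: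
nonnegative, and sums to 1 over all injective sequences of length B from {1,...,N}. -/
theorem piLRU_prob (N B : ℕ) (hN : 1 ≤ N) (hB : 1 ≤ B) (hBN : B ≤ N)
    (lam : Fin N → ℝ) (hlam : ∀ n, 0 < lam n) :
    (∀ r : Fin B ↪ Fin N, 0 ≤ piLRU N B lam r) ∧
      (∑ r : Fin B ↪ Fin N, piLRU N B lam r) = 1 :=
  piLRU_prob_general N B hBN lam hlam
end

section
/- The function π given by π(r) = ∏_{k=1}^B λ_{r(k)}/(Λ - Σ_{i=1}^{k-1} λ_{r(i)}) satisfies the full balance equations of the LRU Markov chain: for every B-permutation r, (Λ - λ_{r(1)})·π(r) = Σ_{n ∉ r} λ_{r(1)}·π(M_n⁻¹(r)) + Σ_{j=2}^B λ_{r(1)}·π(H_j⁻¹(r)). -/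
open Finset

/-- Pre-image of `r` under the LRU miss transition: `n ∉ r` is the oldest object,
the remaining ones are shifted up by one. -/
def Minv (N B : ℕ) (n : Fin N) (r : Fin B → Fin N) : Fin B → Fin N :=
  fun k => if h : k.val + 1 < B then r ⟨k.val + 1, h⟩ else n

/-- Pre-image of `r` under the LRU hit transition at (1-based) rank `j`:
`r 0` sits at rank `j`, objects above it are shifted up by one. -/
def Hinv (N B : ℕ) (j : ℕ) (r : Fin B → Fin N) : Fin B → Fin N :=
  fun l =>
    if h : l.val + 1 < j ∧ l.val + 1 < B then r ⟨l.val + 1, h.2⟩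
    else if l.val + 1 = j then r ⟨0, lt_of_le_of_lt (Nat.zero_le _) l.isLt⟩
    else r l

/-!
Write `q j = Hinv N B j r` (so `q 1 = r`) and `D = residualMass lam`, the denominators of `π`.
In `π q * D q (m + 1)` the factors at positions `m, m + 1` combine to
`λ (q m) λ (q (m + 1)) / D q m`, which is symmetric in the two entries, while all other factors
see them only through their sum. As `q (j + 1)` is `q j` with positions `j - 1, j` swapped and has
`r 0` at position `j`, this gives
`(D (q (j + 1)) (j + 1) + λ (r 0)) π (q (j + 1)) = D (q j) j π (q j)`, which telescopes to
`(Λ - λ (r 0)) π r = D (q B) B π (q B) + λ (r 0) ∑_{j=2}^{B} π (q j)`.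
Finally `Minv n r` is `q B` with its last entry `r 0` replaced by `n`, so
`λ (r 0) π (Minv n r) = λ n π (q B)`, and `∑_{n ∉ r} λ n = D (q B) B`.
-/

theorem add_mul_sum_Icc_eq_of_step {R : Type*} [CommRing R] {a h : ℕ → R} {c : R} {J : ℕ}
    (hJ : 1 ≤ J) (hstep : ∀ j, 1 ≤ j → j < J → (a (j + 1) + c) * h (j + 1) = a j * h j) :
    a J * h J + c * ∑ j ∈ Icc 2 J, h j = a 1 * h 1 := by
  induction J, hJ using Nat.le_induction with
  | base => simp
  | succ J hJ ih =>
    rw [sum_Icc_succ_top (by omega), ← ih fun j hj hjJ => hstep j hj (by omega),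
      ← hstep J hJ (by omega)]
    ring

section ResidualMass

variable {N B : ℕ} (lam : Fin N → ℝ)

noncomputable def residualMass (q : Fin B → Fin N) (k : ℕ) : ℝ :=
  ∑ n, lam n - ∑ i ∈ univ.filter (fun i : Fin B => (i : ℕ) < k), lam (q i)

theorem piLRU_eq_prod_residualMass (q : Fin B → Fin N) :
    piLRU N B lam q = ∏ k : Fin B, lam (q k) / residualMass lam q k := by
  simp only [piLRU, residualMass, Fin.lt_def]

theorem residualMass_congr {q q' : Fin B → Fin N} {k : ℕ}
    (h : ∀ i : Fin B, (i : ℕ) < k → q i = q' i) :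
    residualMass lam q k = residualMass lam q' k := by
  unfold residualMass
  congr 1
  exact sum_congr rfl fun i hi => by rw [h i (mem_filter.1 hi).2]

theorem residualMass_succ (q : Fin B → Fin N) {k : ℕ} (hk : k < B) :
    residualMass lam q (k + 1) = residualMass lam q k - lam (q ⟨k, hk⟩) := by
  have hset : univ.filter (fun i : Fin B => (i : ℕ) < k + 1)
      = insert ⟨k, hk⟩ (univ.filter (fun i : Fin B => (i : ℕ) < k)) := by
    ext i
    simp only [mem_filter, mem_univ, true_and, mem_insert, Fin.ext_iff]
    omega
  rw [residualMass, residualMass, hset, sum_insert (by simp)]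
  ring

theorem residualMass_one (q : Fin B → Fin N) (hB : 0 < B) :
    residualMass lam q 1 = ∑ n, lam n - lam (q ⟨0, hB⟩) := by
  rw [residualMass_succ lam q hB]
  simp [residualMass]

theorem residualMass_of_le (q : Fin B → Fin N) {k : ℕ} (hk : B ≤ k) :
    residualMass lam q k = ∑ n, lam n - ∑ i, lam (q i) := by
  rw [residualMass, filter_true_of_mem fun i _ => by omega]

theorem residualMass_comp_swap (q : Fin B → Fin N) {m k : ℕ} (hm : m + 1 < B) (hk : k ≠ m + 1) :
    residualMass lam (q ∘ Equiv.swap ⟨m, by omega⟩ ⟨m + 1, hm⟩) k = residualMass lam q k := by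
  rcases le_or_gt k m with hkm | hkm
  · refine residualMass_congr lam fun i hi => ?_
    rw [Function.comp_apply, Equiv.swap_apply_of_ne_of_ne] <;> simp [Fin.ext_iff] <;> omega
  · unfold residualMass
    congr 1
    refine Equiv.Perm.sum_comp _ _ (fun i => lam (q i)) fun i hi => ?_
    simp only [coe_filter, mem_univ, true_and, Set.mem_ofPred_eq]
    rcases (Equiv.swap_apply_ne_self_iff.1 hi).2 with rfl | rfl <;> simp <;> omega

theorem sum_filter_forall_ne {q : Fin B → Fin N} (hq : Function.Injective q) :
    ∑ n ∈ univ.filter (fun n => ∀ k, q k ≠ n), lam n = ∑ n, lam n - ∑ k, lam (q k) := by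
  have hset : univ.filter (fun n => ∀ k, q k ≠ n) = (univ.image q)ᶜ := by
    ext n
    simp
  rw [hset, eq_sub_iff_add_eq, ← sum_image fun a _ b _ h => hq h, sum_compl_add_sum]

theorem residualMass_pos (hlam : ∀ n, 0 < lam n) (hBN : B < N) {q : Fin B → Fin N}
    (hq : Function.Injective q) (k : ℕ) : 0 < residualMass lam q k := by
  obtain ⟨n, -, hn⟩ : ∃ n ∈ (univ : Finset (Fin N)), n ∉ univ.image q :=
    exists_mem_notMem_of_card_lt_card (by simpa using card_image_le.trans_lt (by simpa))
  have hfree : 0 < ∑ n, lam n - ∑ i, lam (q i) := by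
    rw [← sum_filter_forall_ne lam hq]
    exact sum_pos (fun n _ => hlam n) ⟨n, by simpa using hn⟩
  have hpart : ∑ i ∈ univ.filter (fun i : Fin B => (i : ℕ) < k), lam (q i) ≤ ∑ i, lam (q i) :=
    sum_le_sum_of_subset_of_nonneg (filter_subset _ _) fun i _ _ => (hlam _).le
  rw [residualMass]
  linarith

theorem piLRU_comp_swap_mul_residualMass (q : Fin B → Fin N) {m : ℕ} (hm : m + 1 < B)
    (hq : residualMass lam q (m + 1) ≠ 0)
    (hqσ : residualMass lam (q ∘ Equiv.swap ⟨m, by omega⟩ ⟨m + 1, hm⟩) (m + 1) ≠ 0) :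
    piLRU N B lam (q ∘ Equiv.swap ⟨m, by omega⟩ ⟨m + 1, hm⟩)
        * residualMass lam (q ∘ Equiv.swap ⟨m, by omega⟩ ⟨m + 1, hm⟩) (m + 1)
      = piLRU N B lam q * residualMass lam q (m + 1) := by
  set a : Fin B := ⟨m, by omega⟩
  set b : Fin B := ⟨m + 1, hm⟩
  have hb : b ∈ ({a}ᶜ : Finset (Fin B)) := by simp [a, b, Fin.ext_iff]
  have hrest : ∀ k ∈ ({a}ᶜ : Finset (Fin B)).erase b,
      lam ((q ∘ Equiv.swap a b) k) / residualMass lam (q ∘ Equiv.swap a b) k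
        = lam (q k) / residualMass lam q k := by
    intro k hk
    obtain ⟨hkb, hka⟩ : k ≠ b ∧ k ≠ a := by simpa using hk
    rw [Function.comp_apply, Equiv.swap_apply_of_ne_of_ne hka hkb,
      residualMass_comp_swap lam q hm (by simpa [b, Fin.ext_iff] using hkb)]
  have hmass_a : residualMass lam (q ∘ Equiv.swap a b) a = residualMass lam q a :=
    residualMass_comp_swap lam q hm (by simp [a])
  rw [piLRU_eq_prod_residualMass, piLRU_eq_prod_residualMass, Fintype.prod_eq_mul_prod_compl a,
    Fintype.prod_eq_mul_prod_compl a, ← mul_prod_erase _ _ hb, ← mul_prod_erase _ _ hb,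
    prod_congr rfl hrest, hmass_a]
  simp only [Function.comp_apply, Equiv.swap_apply_left, Equiv.swap_apply_right,
    show ((b : Fin B) : ℕ) = m + 1 from rfl]
  field_simp

theorem piLRU_mul_lam_last_eq_of_castSucc_eq {C : ℕ} {q q' : Fin (C + 1) → Fin N}
    (h : ∀ i : Fin C, q i.castSucc = q' i.castSucc) :
    piLRU N (C + 1) lam q' * lam (q (Fin.last C))
      = piLRU N (C + 1) lam q * lam (q' (Fin.last C)) := by
  have hmass : ∀ k ≤ C, residualMass lam q' k = residualMass lam q k := fun k hk =>
    residualMass_congr lam fun i hi => (h ⟨i, by omega⟩).symm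
  have hinit : ∀ i : Fin C, lam (q' i.castSucc) / residualMass lam q' i.castSucc
      = lam (q i.castSucc) / residualMass lam q i.castSucc := fun i => by
    rw [h, hmass _ (by simp [i.isLt.le])]
  rw [piLRU_eq_prod_residualMass, piLRU_eq_prod_residualMass, Fin.prod_univ_castSucc,
    Fin.prod_univ_castSucc, Fintype.prod_congr _ _ hinit, Fin.val_last, hmass C le_rfl]
  ring

end ResidualMass

section Preimages

variable {N B : ℕ}

theorem Hinv_one (r : Fin B → Fin N) : Hinv N B 1 r = r := by
  funext l
  by_cases hl : (l : ℕ) = 0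
  · simp [Hinv, show l = ⟨0, l.pos⟩ from Fin.ext hl]
  · simp [Hinv, hl]

theorem Hinv_succ_succ (r : Fin B → Fin N) {m : ℕ} (hm : m + 1 < B) :
    Hinv N B (m + 2) r = Hinv N B (m + 1) r ∘ Equiv.swap ⟨m, by omega⟩ ⟨m + 1, hm⟩ := by
  funext ⟨l, hl⟩
  simp only [Function.comp_apply, Equiv.swap_apply_def, Fin.mk.injEq]
  split_ifs <;> simp only [Hinv] <;> split_ifs <;> first | omega | (subst_vars; rfl)

theorem Hinv_succ_apply (r : Fin B → Fin N) {m : ℕ} (hm : m < B) :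
    Hinv N B (m + 1) r ⟨m, hm⟩ = r ⟨0, by omega⟩ := by
  simp [Hinv]

theorem exists_perm_Hinv_eq (r : Fin B → Fin N) {j : ℕ} (hj : 1 ≤ j) (hjB : j ≤ B) :
    ∃ σ : Equiv.Perm (Fin B), Hinv N B j r = r ∘ σ := by
  induction j, hj using Nat.le_induction with
  | base => exact ⟨1, Hinv_one r⟩
  | succ j hj ih =>
    obtain ⟨m, rfl⟩ : ∃ m, j = m + 1 := ⟨j - 1, by omega⟩
    obtain ⟨σ, hσ⟩ := ih (by omega)
    exact ⟨σ * Equiv.swap _ _, by rw [Hinv_succ_succ r hjB, hσ, Equiv.Perm.coe_mul]; rfl⟩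

theorem Minv_castSucc {C : ℕ} (n : Fin N) (r : Fin (C + 1) → Fin N) (i : Fin C) :
    Minv N (C + 1) n r i.castSucc = Hinv N (C + 1) (C + 1) r i.castSucc := by
  simp [Minv, Hinv]

theorem Minv_last {C : ℕ} (n : Fin N) (r : Fin (C + 1) → Fin N) :
    Minv N (C + 1) n r (Fin.last C) = n := by
  simp [Minv]

end Preimages

section Balance

variable {N B : ℕ} (lam : Fin N → ℝ) (r : Fin B → Fin N)

theorem residualMass_Hinv_pos (hlam : ∀ n, 0 < lam n) (hBN : B < N) (hr : Function.Injective r)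
    {j : ℕ} (hj : 1 ≤ j) (hjB : j ≤ B) (k : ℕ) : 0 < residualMass lam (Hinv N B j r) k := by
  obtain ⟨σ, hσ⟩ := exists_perm_Hinv_eq r hj hjB
  exact residualMass_pos lam hlam hBN (hσ ▸ hr.comp σ.injective) k

theorem residualMass_mul_piLRU_Hinv_succ (hlam : ∀ n, 0 < lam n) (hBN : B < N)
    (hr : Function.Injective r) {j : ℕ} (hj : 1 ≤ j) (hjB : j < B) :
    (residualMass lam (Hinv N B (j + 1) r) (j + 1) + lam (r ⟨0, by omega⟩))
        * piLRU N B lam (Hinv N B (j + 1) r)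
      = residualMass lam (Hinv N B j r) j * piLRU N B lam (Hinv N B j r) := by
  obtain ⟨m, rfl⟩ : ∃ m, j = m + 1 := ⟨j - 1, by omega⟩
  rw [residualMass_succ lam _ hjB, Hinv_succ_apply r hjB, sub_add_cancel, mul_comm,
    mul_comm (residualMass _ _ _), Hinv_succ_succ r hjB]
  refine piLRU_comp_swap_mul_residualMass lam _ hjB
    (residualMass_Hinv_pos lam r hlam hBN hr hj hjB.le _).ne' ?_
  rw [← Hinv_succ_succ r hjB]
  exact (residualMass_Hinv_pos lam r hlam hBN hr (by omega) hjB _).ne'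

theorem sum_filter_forall_ne_eq_residualMass_Hinv (hr : Function.Injective r) (hB : 0 < B) :
    ∑ n ∈ univ.filter (fun n : Fin N => ∀ k, r k ≠ n), lam n
      = residualMass lam (Hinv N B B r) B := by
  obtain ⟨σ, hσ⟩ := exists_perm_Hinv_eq r hB le_rfl
  rw [sum_filter_forall_ne lam hr, residualMass_of_le lam _ le_rfl, hσ]
  simp only [Function.comp_apply, Equiv.sum_comp σ (fun i => lam (r i))]

theorem lam_mul_piLRU_Minv {C : ℕ} (r : Fin (C + 1) → Fin N) (n : Fin N) :
    lam (r ⟨0, C.succ_pos⟩) * piLRU N (C + 1) lam (Minv N (C + 1) n r)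
      = piLRU N (C + 1) lam (Hinv N (C + 1) (C + 1) r) * lam n := by
  have := piLRU_mul_lam_last_eq_of_castSucc_eq lam fun i => (Minv_castSucc n r i).symm
  rwa [Minv_last, Fin.last, Hinv_succ_apply, mul_comm] at this

end Balance

/-- `piLRU` satisfies the full balance equations of the LRU Markov chain. -/
theorem piLRU_full_balance (N B : ℕ) (hB : 0 < B) (hBN : B < N)
    (lam : Fin N → ℝ) (hlam : ∀ n, 0 < lam n)
    (r : Fin B → Fin N) (hr : Function.Injective r) :
    ((∑ n, lam n) - lam (r ⟨0, hB⟩)) * piLRU N B lam r =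
      (∑ n ∈ Finset.univ.filter (fun n : Fin N => ∀ k, r k ≠ n),
        lam (r ⟨0, hB⟩) * piLRU N B lam (Minv N B n r))
      + ∑ j ∈ Finset.Icc 2 B, lam (r ⟨0, hB⟩) * piLRU N B lam (Hinv N B j r) := by
  obtain ⟨C, rfl⟩ : ∃ C, B = C + 1 := ⟨B - 1, by omega⟩
  have htelescope := add_mul_sum_Icc_eq_of_step
    (a := fun j => residualMass lam (Hinv N (C + 1) j r) j)
    (h := fun j => piLRU N (C + 1) lam (Hinv N (C + 1) j r)) (c := lam (r ⟨0, hB⟩)) (by omega)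
    fun j hj hjB => residualMass_mul_piLRU_Hinv_succ lam r hlam hBN hr hj hjB
  simp only [Hinv_one, residualMass_one lam r hB] at htelescope
  rw [sum_congr rfl fun n _ => lam_mul_piLRU_Minv lam r n, ← mul_sum,
    sum_filter_forall_ne_eq_residualMass_Hinv lam r hr hB, ← mul_sum, ← htelescope]
  ring
end

section
/- The Random Eviction (RE) Markov chain on B-subsets of {1,...,N}, where a transition from state s to state (s \ {ℓ}) ∪ {n} (with ℓ ∈ s, n ∉ s) occurs at rate λ_n/B, satisfies detailed balance with respect to w(s) = ∏_{n∈s} λ_n; hence π(s) = ∏_{n∈s} λ_n / Σ_{s'} ∏_{n∈s'} λ_n is a reversible invariant distribution. -/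
open Finset

theorem Finset.prod_mul_eq_prod_insert_erase_mul {α β : Type*} [DecidableEq α] [CommMonoid β]
    {s : Finset α} {l n : α} (hl : l ∈ s) (hn : n ∉ s) (f : α → β) :
    (∏ i ∈ s, f i) * f n = (∏ i ∈ insert n (s.erase l), f i) * f l := by
  rw [prod_insert fun h => hn (mem_of_mem_erase h), ← mul_prod_erase s f hl]
  ac_rfl

theorem re_detailed_balance_general (N B : ℕ)
    (lam : Fin N → ℝ)
    (s : Finset (Fin N))
    (l : Fin N) (hl : l ∈ s) (n : Fin N) (hn : n ∉ s) :
    (∏ i ∈ s, lam i) * (lam n / B) =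
      (∏ i ∈ insert n (s.erase l), lam i) * (lam l / B) := by
  rw [mul_div_assoc', mul_div_assoc', prod_mul_eq_prod_insert_erase_mul hl hn]

/-- The Random Eviction (RE) chain on B-subsets satisfies detailed balance with
respect to `w(s) = ∏_{i∈s} λ_i`: a miss for `n ∉ s` evicting `ℓ ∈ s` occurs at
rate `λ_n / B`, and the reverse transition at rate `λ_ℓ / B`. -/
theorem re_detailed_balance (N B : ℕ) (hB : 0 < B) (hBN : B < N)
    (lam : Fin N → ℝ) (hlam : ∀ n, 0 < lam n)
    (s : Finset (Fin N)) (hs : s.card = B)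
    (l : Fin N) (hl : l ∈ s) (n : Fin N) (hn : n ∉ s) :
    (∏ i ∈ s, lam i) * (lam n / B) =
      (∏ i ∈ insert n (s.erase l), lam i) * (lam l / B) :=
  re_detailed_balance_general N B lam s l hl n hn
end

section
/- For any injective sequence r(1),...,r(B) of distinct indices from {1,...,N} with B ≥ 2, positive λ's, Λ_{-r} = Σ_{i=1}^B λ_{r(i)}, the following identity holds: 1 = Σ_{j=2}^{B-1} [∏_{k=2}^{j-1} (Λ_{-r} - Σ_{i=1}^{k} λ_{r(i)})/(Λ_{-r} - Σ_{i=2}^{k} λ_{r(i)})] · λ_{r(1)}/(Λ_{-r} - Σ_{i=2}^{j} λ_{r(i)}) + ∏_{k=2}^{B-1} (Λ_{-r} - Σ_{i=1}^{k} λ_{r(i)})/(Λ_{-r} - Σ_{i=2}^{k} λ_{r(i)}), with the conventions that empty products equal 1 and empty sums equal 0. -/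
/-!
Write `b k = Λ - (λ_{r(2)} + ⋯ + λ_{r(k)})` and `p k = λ_{r(1)} / b k`. Since
`Λ - (λ_{r(1)} + ⋯ + λ_{r(k)}) = b k - λ_{r(1)}`, every factor of the products is `1 - p k`,
so the right-hand side is `Σ_j p j ∏_{k<j} (1 - p k) + ∏_k (1 - p k)`: the probability of a
first success at some step `j`, plus that of no success at all. This sum is `1` in any
commutative ring (`Finset.prod_one_sub_ordered`); the only analytic input is `b k > 0`,
as `b k` still contains `λ_{r(1)}`.
-/

open Finset

theorem sum_Icc_one_eq_add_sum_Icc_two {M : Type*} [AddCommMonoid M] (f : ℕ → M) {k : ℕ}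
    (hk : 1 ≤ k) : ∑ i ∈ Icc 1 k, f i = f 1 + ∑ i ∈ Icc 2 k, f i := by
  rw [Icc_eq_cons_Ioc hk, sum_cons, ← Icc_add_one_left_eq_Ioc]
  rfl

theorem sum_Icc_one_sub_sum_Icc_two {M : Type*} [AddCommGroup M] (f : ℕ → M) {k B : ℕ}
    (hk : 1 ≤ k) (hkB : k ≤ B) :
    ∑ i ∈ Icc 1 B, f i - ∑ i ∈ Icc 2 k, f i = f 1 + ∑ i ∈ Ioc k B, f i := by
  have hIcc_two : ∀ n, Icc 2 n = Ioc 1 n := Icc_add_one_left_eq_Ioc 1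
  rw [sum_Icc_one_eq_add_sum_Icc_two f (hk.trans hkB), hIcc_two, hIcc_two,
    ← sum_Ioc_consecutive f hk hkB]
  abel

theorem sum_Icc_prod_one_sub_mul_add_prod_one_sub {R : Type*} [CommRing R] (p : ℕ → R)
    {a : ℕ} (ha : 1 ≤ a) (m : ℕ) :
    ∑ j ∈ Icc a m, (∏ k ∈ Icc a (j - 1), (1 - p k)) * p j + ∏ k ∈ Icc a m, (1 - p k) = 1 := by
  have hbefore : ∀ j ∈ Icc a m, {k ∈ Icc a m | k < j} = Icc a (j - 1) := by
    intro j hj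
    ext k
    simp only [mem_filter, mem_Icc] at hj ⊢
    omega
  have hfirst : ∑ j ∈ Icc a m, p j * ∏ k ∈ Icc a m with k < j, (1 - p k) =
      ∑ j ∈ Icc a m, (∏ k ∈ Icc a (j - 1), (1 - p k)) * p j :=
    sum_congr rfl fun j hj => by rw [hbefore j hj, mul_comm]
  rw [prod_one_sub_ordered, hfirst]
  abel

theorem one_eq_sum_prod_div_mul_div_add_prod_div {K : Type*} [Field K] (f : ℕ → K) (Λ : K)
    (m : ℕ) (hden : ∀ k ∈ Icc 2 m, Λ - ∑ i ∈ Icc 2 k, f i ≠ 0) :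
    (1 : K) =
      (∑ j ∈ Icc 2 m,
        (∏ k ∈ Icc 2 (j - 1), (Λ - ∑ i ∈ Icc 1 k, f i) / (Λ - ∑ i ∈ Icc 2 k, f i)) *
          (f 1 / (Λ - ∑ i ∈ Icc 2 j, f i)))
      + ∏ k ∈ Icc 2 m, (Λ - ∑ i ∈ Icc 1 k, f i) / (Λ - ∑ i ∈ Icc 2 k, f i) := by
  have hfactor : ∀ k ∈ Icc 2 m, (Λ - ∑ i ∈ Icc 1 k, f i) / (Λ - ∑ i ∈ Icc 2 k, f i) =
      1 - f 1 / (Λ - ∑ i ∈ Icc 2 k, f i) := by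
    intro k hk
    rw [one_sub_div (hden k hk), sum_Icc_one_eq_add_sum_Icc_two f (by grind)]
    ring
  rw [prod_congr rfl hfactor,
    sum_congr rfl fun j hj => by rw [prod_congr rfl fun k hk => hfactor k (by grind)],
    sum_Icc_prod_one_sub_mul_add_prod_one_sub _ one_le_two]

theorem mru_balance_identity_general (N B : ℕ)
    (lam : Fin N → ℝ) (hlam : ∀ n, 0 < lam n)
    (r : ℕ → Fin N)
    (Λr : ℝ) (hΛr : Λr = ∑ i ∈ Finset.Icc 1 B, lam (r i)) :
    (1 : ℝ) =
      (∑ j ∈ Finset.Icc 2 (B - 1),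
        (∏ k ∈ Finset.Icc 2 (j - 1),
          (Λr - ∑ i ∈ Finset.Icc 1 k, lam (r i)) /
            (Λr - ∑ i ∈ Finset.Icc 2 k, lam (r i))) *
          (lam (r 1) / (Λr - ∑ i ∈ Finset.Icc 2 j, lam (r i))))
      + ∏ k ∈ Finset.Icc 2 (B - 1),
          (Λr - ∑ i ∈ Finset.Icc 1 k, lam (r i)) /
            (Λr - ∑ i ∈ Finset.Icc 2 k, lam (r i)) := by
  refine one_eq_sum_prod_div_mul_div_add_prod_div (fun i => lam (r i)) Λr (B - 1) ?_
  intro k hk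
  rw [hΛr, sum_Icc_one_sub_sum_Icc_two _ (by grind) (by grind)]
  exact (add_pos_of_pos_of_nonneg (hlam _) (sum_nonneg fun i _ => (hlam _).le)).ne'

/-- Key identity verifying the full balance equations for the MRU invariant:
law of total probability for the position at which object `r 1` enters when
filling a cache restricted to the objects of `r`, given `r 2` is chosen first.
Here `Λr = Σ_{i=1}^B λ_{r(i)}`. -/
theorem mru_balance_identity (N B : ℕ) (hB : 2 ≤ B) (hBN : B ≤ N)
    (lam : Fin N → ℝ) (hlam : ∀ n, 0 < lam n)
    (r : ℕ → Fin N) (hr : Set.InjOn r (Set.Icc 1 B))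
    (Λr : ℝ) (hΛr : Λr = ∑ i ∈ Finset.Icc 1 B, lam (r i)) :
    (1 : ℝ) =
      (∑ j ∈ Finset.Icc 2 (B - 1),
        (∏ k ∈ Finset.Icc 2 (j - 1),
          (Λr - ∑ i ∈ Finset.Icc 1 k, lam (r i)) /
            (Λr - ∑ i ∈ Finset.Icc 2 k, lam (r i))) *
          (lam (r 1) / (Λr - ∑ i ∈ Finset.Icc 2 j, lam (r i))))
      + ∏ k ∈ Finset.Icc 2 (B - 1),
          (Λr - ∑ i ∈ Finset.Icc 1 k, lam (r i)) /
            (Λr - ∑ i ∈ Finset.Icc 2 k, lam (r i)) :=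
  mru_balance_identity_general N B lam hlam r Λr hΛr
end

section
/- The MRU invariant candidate π(r) = (λ_{r(1)}/Λ) · (1/C(N-1,B-1)) · ∏_{k=2}^{B-1} λ_{r(k)}/(Λ_{-r} - Σ_{i=1}^{k-1} λ_{r(i)}), where Λ_{-r} = Σ_{i=1}^B λ_{r(i)}, defines a probability distribution on the set of B-permutations of {1,...,N}: it is nonnegative and its sum over all B-permutations equals 1. -/
/-!
Write `B = m + 1`. The last factor of the product in `π` equals `1`, and after adding it
`π(r) = λ_{r 0} / Λ · C(N-1, m)⁻¹ · PL(λ ∘ tail r)`, where `PL(v) = ∏ₖ vₖ / ∑_{j ≥ k} vⱼ` is the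
Plackett–Luce probability of drawing `v 0, v 1, …` in this order by weighted sampling without
replacement. Summed over the orderings of a fixed `m`-set, `PL` gives `1` (condition on the first
draw and induct on `m`), so summed over the injective sequences avoiding a given `a` it gives
`C(N-1, m)`. Summing over the first entry `a = r 0` leaves `∑ₐ λₐ / Λ = 1`.
-/

open Finset

/-- The MRU invariant candidate (0-based ranks):
`π(r) = (λ_{r(1)}/Λ) · (1/C(N-1,B-1)) · ∏_{k=2}^{B-1} λ_{r(k)}/(Λ_{-r} - Σ_{i=1}^{k-1} λ_{r(i)})`
where `Λ_{-r} = Σ_{i=1}^B λ_{r(i)}`. -/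
noncomputable def piMRU (N B : ℕ) (lam : Fin N → ℝ) (r : Fin B → Fin N) : ℝ :=
  if h : 0 < B then
    lam (r ⟨0, h⟩) / (∑ n, lam n) * (1 / (Nat.choose (N - 1) (B - 1) : ℝ)) *
      ∏ k ∈ Finset.univ.filter (fun k : Fin B => 1 ≤ k.val ∧ k.val < B - 1),
        lam (r k) /
          ((∑ i : Fin B, lam (r i)) -
            ∑ i ∈ Finset.univ.filter (fun i : Fin B => i < k), lam (r i))
  else 0

namespace Fin

theorem sum_sub_sum_filter_lt {M : Type*} [AddCommGroup M] {n : ℕ} (v : Fin n → M) (k : Fin n) :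
    ∑ i, v i - ∑ i with i < k, v i = ∑ i with k ≤ i, v i := by
  rw [sub_eq_iff_eq_add, ← sum_filter_add_sum_filter_not univ (k ≤ ·)]
  simp only [not_le]

theorem sum_filter_succ_le {M : Type*} [AddCommMonoid M] {n : ℕ} (v : Fin (n + 1) → M)
    (k : Fin n) : ∑ j with k.succ ≤ j, v j = ∑ j with k ≤ j, v j.succ := by
  simp [sum_filter, Fin.sum_univ_succ, Fin.succ_le_succ_iff]

theorem image_cons {α : Type*} [DecidableEq α] {n : ℕ} (a : α) (g : Fin n → α) :
    univ.image (Fin.cons a g : Fin (n + 1) → α) = insert a (univ.image g) := by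
  ext; simp [Fin.exists_fin_succ, eq_comm]

theorem sum_embedding_succ {α M : Type*} [Fintype α] [DecidableEq α] [AddCommMonoid M] {n : ℕ}
    (F : (Fin (n + 1) → α) → M) :
    ∑ f : Fin (n + 1) ↪ α, F f =
      ∑ a, ∑ g ∈ univ.filter (fun g : Fin n ↪ α => a ∉ Set.range g), F (Fin.cons a g) := by
  rw [← (Equiv.embeddingFinSucc n α).symm.sum_comp, ← univ_sigma_univ, sum_sigma]
  simp_rw [Equiv.coe_embeddingFinSucc_symm]
  calc ∑ g : Fin n ↪ α, ∑ a : {a // a ∉ Set.range g}, F (Fin.cons a g)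
      = ∑ g : Fin n ↪ α, ∑ a ∈ univ.filter (· ∉ Set.range g), F (Fin.cons a g) :=
        sum_congr rfl fun g _ => (sum_subtype _ mem_filter_univ fun a => F (Fin.cons a g)).symm
    _ = _ := sum_comm' fun g a => by simp

end Fin

noncomputable def plackettLuce {n : ℕ} (v : Fin n → ℝ) : ℝ :=
  ∏ k, v k / ∑ j with k ≤ j, v j

theorem plackettLuce_nonneg {n : ℕ} {v : Fin n → ℝ} (hv : ∀ k, 0 ≤ v k) :
    0 ≤ plackettLuce v :=
  prod_nonneg fun k _ => div_nonneg (hv k) (sum_nonneg fun j _ => hv j)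

theorem plackettLuce_cons {n : ℕ} (x : ℝ) (v : Fin n → ℝ) :
    plackettLuce (Fin.cons x v) = x / (x + ∑ j, v j) * plackettLuce v := by
  simp only [plackettLuce, Fin.prod_univ_succ, Fin.sum_filter_succ_le, Fin.zero_le, filter_true,
    Fin.sum_univ_succ, Fin.cons_zero, Fin.cons_succ]

theorem prod_div_sub_sum_lt_eq_plackettLuce_tail {n : ℕ} (v : Fin (n + 1) → ℝ)
    (hv : v (Fin.last n) ≠ 0) :
    ∏ k : Fin (n + 1) with 1 ≤ k.val ∧ k.val < n, v k / (∑ i, v i - ∑ i with i < k, v i) =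
      plackettLuce (Fin.tail v) := by
  simp only [Fin.sum_sub_sum_filter_lt, prod_filter, Fin.prod_univ_succ, Fin.sum_filter_succ_le,
    Fin.val_zero, Fin.val_succ, le_add_iff_nonneg_left, zero_le, true_and, plackettLuce]
  rw [if_neg (by simp), one_mul]
  refine prod_congr rfl fun k _ => ?_
  split_ifs with hk
  · rfl
  · have hlast : k.succ = Fin.last n := Fin.ext (by simp; omega)
    have hsingle : univ.filter (k ≤ ·) = {k} := by
      ext j
      simp only [mem_filter_univ, mem_singleton, Fin.le_def, Fin.ext_iff]
      omega
    rw [hsingle, sum_singleton, Fin.tail, hlast, div_self hv]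

section SumOverEmbeddings

variable {α : Type*} [Fintype α] [DecidableEq α] {w : α → ℝ}

theorem sum_plackettLuce_cons_of_mem {n : ℕ} {s : Finset α} {a : α} (ha : a ∈ s) :
    ∑ g ∈ univ.filter (fun g : Fin n ↪ α => a ∉ Set.range g ∧ univ.image (Fin.cons a g) = s),
        plackettLuce (w ∘ Fin.cons a g) =
      w a / (∑ x ∈ s, w x) *
        ∑ g ∈ univ.filter (fun g : Fin n ↪ α => univ.image g = s.erase a),
          plackettLuce (w ∘ g) := by
  have hcond : ∀ g : Fin n ↪ α,
      a ∉ Set.range g ∧ univ.image (Fin.cons a g) = s ↔ univ.image g = s.erase a := by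
    intro g
    have hrange : a ∈ Set.range g ↔ a ∈ univ.image g := by simp
    rw [Fin.image_cons, hrange]
    grind
  have hterm : ∀ g ∈ univ.filter (fun g : Fin n ↪ α => univ.image g = s.erase a),
      plackettLuce (w ∘ Fin.cons a g) = w a / (∑ x ∈ s, w x) * plackettLuce (w ∘ g) := by
    intro g hg
    rw [mem_filter_univ] at hg
    rw [Fin.comp_cons, plackettLuce_cons, Function.comp_def,
      ← sum_image fun x _ y _ hxy => g.injective hxy, hg, add_sum_erase _ _ ha]
  rw [filter_congr fun g _ => hcond g, sum_congr rfl hterm, mul_sum]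

theorem sum_plackettLuce_of_image_eq (hw : ∀ a, 0 < w a) {n : ℕ} {s : Finset α}
    (hs : s.card = n) :
    ∑ f ∈ univ.filter (fun f : Fin n ↪ α => univ.image f = s), plackettLuce (w ∘ f) = 1 := by
  induction n generalizing s with
  | zero =>
    obtain rfl := card_eq_zero.1 hs
    simp [plackettLuce]
  | succ n ih =>
    have hW : ∑ x ∈ s, w x ≠ 0 := (sum_pos (fun x _ => hw x) (card_pos.1 (by omega))).ne'
    rw [sum_filter, Fin.sum_embedding_succ fun f =>
      if univ.image f = s then plackettLuce (w ∘ f) else 0]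
    calc ∑ a, ∑ g ∈ univ.filter (fun g : Fin n ↪ α => a ∉ Set.range g),
          (if univ.image (Fin.cons a g) = s then plackettLuce (w ∘ Fin.cons a g) else 0)
        = ∑ a, if a ∈ s then w a / ∑ x ∈ s, w x else 0 := by
          refine sum_congr rfl fun a _ => ?_
          rw [← sum_filter, filter_filter]
          split_ifs with ha
          · rw [sum_plackettLuce_cons_of_mem ha,
              ih (by rw [card_erase_of_mem ha, hs]; rfl), mul_one]
          · refine sum_eq_zero fun g hg => absurd ?_ ha
            rw [mem_filter_univ, Fin.image_cons] at hg
            exact hg.2 ▸ mem_insert_self a _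
      _ = 1 := by rw [← sum_filter, filter_mem_eq_inter, univ_inter, ← sum_div, div_self hW]

theorem sum_plackettLuce_of_image_subset (hw : ∀ a, 0 < w a) (n : ℕ) (t : Finset α) :
    ∑ g ∈ univ.filter (fun g : Fin n ↪ α => univ.image g ⊆ t), plackettLuce (w ∘ g) =
      t.card.choose n := by
  have hmaps : ∀ g ∈ univ.filter (fun g : Fin n ↪ α => univ.image g ⊆ t),
      univ.image g ∈ t.powersetCard n := fun g hg =>
    mem_powersetCard.2 ⟨(mem_filter.1 hg).2, by simp [card_image_of_injective _ g.injective]⟩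
  rw [← sum_fiberwise_of_maps_to hmaps]
  have hfiber : ∀ s ∈ t.powersetCard n,
      ∑ g ∈ (univ.filter fun g : Fin n ↪ α => univ.image g ⊆ t).filter
        (fun g : Fin n ↪ α => univ.image g = s), plackettLuce (w ∘ g) = 1 := by
    intro s hs
    obtain ⟨hst, hcard⟩ := mem_powersetCard.1 hs
    rw [filter_filter, filter_congr fun g _ => and_iff_right_of_imp fun h => h ▸ hst]
    exact sum_plackettLuce_of_image_eq hw hcard
  simp [sum_congr rfl hfiber]

end SumOverEmbeddings

theorem piMRU_succ {N m : ℕ} {lam : Fin N → ℝ} (hlam : ∀ n, lam n ≠ 0) (r : Fin (m + 1) → Fin N) :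
    piMRU N (m + 1) lam r =
      lam (r 0) / (∑ n, lam n) / (N - 1).choose m * plackettLuce (lam ∘ Fin.tail r) := by
  have htail := prod_div_sub_sum_lt_eq_plackettLuce_tail (lam ∘ r) (hlam _)
  simp only [Function.comp_apply] at htail
  rw [piMRU, dif_pos m.succ_pos, Nat.add_sub_cancel, htail, mul_one_div]
  rfl

/-- The MRU invariant candidate is a probability distribution on the set of
B-permutations of {1,...,N}: nonnegative and summing to 1. -/
theorem piMRU_prob (N B : ℕ) (hB : 2 ≤ B) (hBN : B < N)
    (lam : Fin N → ℝ) (hlam : ∀ n, 0 < lam n) :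
    (∀ r : Fin B ↪ Fin N, 0 ≤ piMRU N B lam r) ∧
      (∑ r : Fin B ↪ Fin N, piMRU N B lam r) = 1 := by
  obtain ⟨m, rfl⟩ : ∃ m, B = m + 1 := ⟨B - 1, by omega⟩
  have hΛ : 0 < ∑ n, lam n := sum_pos (fun n _ => hlam n) ⟨⟨0, by omega⟩, mem_univ _⟩
  have hC : ((N - 1).choose m : ℝ) ≠ 0 := by exact_mod_cast (Nat.choose_pos (by omega)).ne'
  have hpi := piMRU_succ (m := m) fun n => (hlam n).ne'
  refine ⟨fun r => ?_, ?_⟩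
  · rw [hpi]
    exact mul_nonneg (div_nonneg (div_nonneg (hlam _).le hΛ.le) (Nat.cast_nonneg _))
      (plackettLuce_nonneg fun k => (hlam _).le)
  calc ∑ r : Fin (m + 1) ↪ Fin N, piMRU N (m + 1) lam r
      = ∑ a, lam a / (∑ n, lam n) / (N - 1).choose m *
          ∑ g ∈ univ.filter (fun g : Fin m ↪ Fin N => a ∉ Set.range g), plackettLuce (lam ∘ g) := by
        simp only [hpi, Fin.sum_embedding_succ fun r =>
          lam (r 0) / (∑ n, lam n) / (N - 1).choose m * plackettLuce (lam ∘ Fin.tail r),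
          Fin.cons_zero, Fin.tail_cons, mul_sum]
    _ = ∑ a, lam a / ∑ n, lam n := by
        refine sum_congr rfl fun a _ => ?_
        have hrange : ∀ g : Fin m ↪ Fin N, a ∉ Set.range g ↔ univ.image g ⊆ univ.erase a := by
          simp [subset_iff]
        rw [filter_congr fun g _ => hrange g, sum_plackettLuce_of_image_subset hlam,
          card_erase_of_mem (mem_univ a), card_univ, Fintype.card_fin, div_mul_cancel₀ _ hC]
    _ = 1 := by rw [← sum_div, div_self hΛ.ne']
end

section
/- In the special case B = 3, N = 4, the function π(r) = λ_{r(1)}·λ_{r(2)} / (3·Λ·(λ_{r(2)} + λ_{r(3)})) satisfies the MRU full balance equations: for every 3-permutation r of {1,2,3,4}, (Λ - λ_{r(1)})·π(r) = λ_{r(1)}·π(M_n⁻¹(r)) + Σ_{j=2}^{3} λ_{r(1)}·π(H_j⁻¹(r)), where n is the unique object not in r. -/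
open Finset

/-- MRU invariant candidate for `B = 3`, `N = 4`:
`π(r) = λ_{r(1)} λ_{r(2)} / (3 Λ (λ_{r(2)} + λ_{r(3)}))`. -/
noncomputable def piMRU34 (lam : Fin 4 → ℝ) (r : Fin 3 → Fin 4) : ℝ :=
  lam (r 0) * lam (r 1) / (3 * (∑ n, lam n) * (lam (r 1) + lam (r 2)))

theorem Fintype.sum_eq_sum_comp_add_of_injective {α M : Type*} [Fintype α] [AddCommMonoid M]
    {k : ℕ} (hcard : Fintype.card α = k + 1) (r : Fin k → α) (hr : Function.Injective r)
    (n : α) (hn : n ∉ Set.range r) (f : α → M) :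
    ∑ x, f x = ∑ i, f (r i) + f n := by
  have hinj : Function.Injective (Fin.cons n r : Fin (k + 1) → α) :=
    Fin.cons_injective_iff.mpr ⟨hn, hr⟩
  have hbij : Function.Bijective (Fin.cons n r : Fin (k + 1) → α) :=
    (Fintype.bijective_iff_injective_and_card _).mpr ⟨hinj, by simp [hcard]⟩
  rw [← hbij.sum_comp, Fin.sum_univ_succ, add_comm]
  simp only [Fin.cons_zero, Fin.cons_succ]

/-- The miss term balances the `λ_n` part of the outflow; the two hit terms add up to
`a b / (3 (a + b + c + d))`, which balances the `λ_{r(2)} + λ_{r(3)}` part. -/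
theorem mru_balance_identity_s9 (a b c d : ℝ) (hbc : b + c ≠ 0) (hac : a + c ≠ 0) :
    ((a + b + c + d) - a) * (a * b / (3 * (a + b + c + d) * (b + c))) =
      a * (d * b / (3 * (a + b + c + d) * (b + c)))
        + (a * (b * a / (3 * (a + b + c + d) * (a + c)))
            + a * (b * c / (3 * (a + b + c + d) * (c + a)))) := by
  rcases eq_or_ne (a + b + c + d) 0 with hS | hS
  · simp [hS]
  have hca : c + a ≠ 0 := by rwa [add_comm]
  field_simp
  ring

/-- For `B = 3`, `N = 4`, `π(r) = λ_{r(1)} λ_{r(2)} / (3 Λ (λ_{r(2)} + λ_{r(3)}))`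
satisfies the MRU full balance equations: the miss pre-image is
`M_n⁻¹(r) = (n, r(2), r(3))` (the missed object `n ∉ r` was youngest), and the hit
pre-images are `H_2⁻¹(r) = (r(2), r(1), r(3))` and `H_3⁻¹(r) = (r(2), r(3), r(1))`. -/
theorem mru_balance_B3N4 (lam : Fin 4 → ℝ) (hlam : ∀ n, 0 < lam n)
    (Λ : ℝ) (hΛ : Λ = ∑ n, lam n)
    (r : Fin 3 → Fin 4) (hr : Function.Injective r)
    (n : Fin 4) (hn : ∀ k, r k ≠ n) :
    (Λ - lam (r 0)) * piMRU34 lam r =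
      lam (r 0) * piMRU34 lam ![n, r 1, r 2]
        + (lam (r 0) * piMRU34 lam ![r 1, r 0, r 2]
            + lam (r 0) * piMRU34 lam ![r 1, r 2, r 0]) := by
  have hsum : ∑ m, lam m = lam (r 0) + lam (r 1) + lam (r 2) + lam n := by
    rw [Fintype.sum_eq_sum_comp_add_of_injective (by simp) r hr n
      (fun ⟨k, hk⟩ => hn k hk), Fin.sum_univ_three]
  simp only [piMRU34, Matrix.cons_val_zero, Matrix.cons_val_one, Matrix.cons_val_two,
    Matrix.head_cons, Matrix.tail_cons, hΛ, hsum]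
  exact mru_balance_identity_s9 _ _ _ _ (by linarith [hlam (r 1), hlam (r 2)])
    (by linarith [hlam (r 0), hlam (r 2)])
end

section
/- For the tree network of independent RE local caches feeding misses to a size-1 Internet cache, the conditional distribution π(R | r̄) = [Σ_q 1{R ∈ r_q}·Λ_{q,r̄_q}/B_q] / [Σ_q Λ_{q,r̄_q}], where Λ_{q,x̄} = Σ_{ℓ∉x} λ_{q,ℓ}, together with the product of RE invariants for the local caches, satisfies the full balance equations of the joint Markov chain. -/
open Finset

/-- Total rate of queries at local cache `q` for objects outside `x`. -/
noncomputable def LamOut (Q N : ℕ) (lam : Fin Q → Fin N → ℝ) (q : Fin Q)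
    (x : Finset (Fin N)) : ℝ :=
  ∑ l ∈ Finset.univ \ x, lam q l

/-- RE invariant of local cache `q` (of capacity `B q`). -/
noncomputable def piLoc (Q N : ℕ) (B : Fin Q → ℕ) (lam : Fin Q → Fin N → ℝ)
    (q : Fin Q) (s : Finset (Fin N)) : ℝ :=
  (∏ i ∈ s, lam q i) /
    (∑ t ∈ Finset.powersetCard (B q) (Finset.univ : Finset (Fin N)), ∏ i ∈ t, lam q i)

/-- Conditional distribution of the size-1 Internet cache content `R` given the
local cache states `rb`. -/
noncomputable def piCond (Q N : ℕ) (B : Fin Q → ℕ) (lam : Fin Q → Fin N → ℝ)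
    (R : Fin N) (rb : Fin Q → Finset (Fin N)) : ℝ :=
  (∑ q, if R ∈ rb q then LamOut Q N lam q (rb q) / (B q : ℝ) else 0) /
    (∑ q, LamOut Q N lam q (rb q))

/-- Joint candidate invariant: conditional Internet-cache distribution times the
product of local RE invariants. -/
noncomputable def piJoint (Q N : ℕ) (B : Fin Q → ℕ) (lam : Fin Q → Fin N → ℝ)
    (rb : Fin Q → Finset (Fin N)) (R : Fin N) : ℝ :=
  piCond Q N B lam R rb * ∏ q, piLoc Q N B lam q (rb q)

lemma lamOut_pos (Q N : ℕ) (lam : Fin Q → Fin N → ℝ) (hlam : ∀ q n, 0 < lam q n)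
    (q : Fin Q) (x : Finset (Fin N)) (hx : x.card < N) : 0 < LamOut Q N lam q x := by
  apply Finset.sum_pos (fun i _ => hlam q i)
  rw [← Finset.card_pos, Finset.card_sdiff_of_subset (Finset.subset_univ x), Finset.card_univ,
    Fintype.card_fin]
  omega

lemma piLoc_pos (Q N : ℕ) (B : Fin Q → ℕ) (lam : Fin Q → Fin N → ℝ)
    (hlam : ∀ q n, 0 < lam q n) (q : Fin Q) (hBle : B q ≤ N) (s : Finset (Fin N)) :
    0 < piLoc Q N B lam q s := by
  apply div_pos (Finset.prod_pos fun i _ => hlam q i)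
  apply Finset.sum_pos (fun t _ => Finset.prod_pos fun i _ => hlam q i)
  rw [Finset.powersetCard_nonempty, Finset.card_univ, Fintype.card_fin]
  exact hBle

lemma sum_piCond (Q N : ℕ) (hQ : 0 < Q) (B : Fin Q → ℕ) (lam : Fin Q → Fin N → ℝ)
    (hlam : ∀ q n, 0 < lam q n) (hB : ∀ q, 0 < B q)
    (rb : Fin Q → Finset (Fin N)) (hcard : ∀ q, (rb q).card = B q) (hBN : ∀ q, B q < N) :
    ∑ l, piCond Q N B lam l rb = 1 := by
  haveI : Nonempty (Fin Q) := ⟨⟨0, hQ⟩⟩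
  unfold piCond
  rw [← Finset.sum_div, Finset.sum_comm]
  have h1 : ∀ q : Fin Q,
      (∑ l : Fin N, if l ∈ rb q then LamOut Q N lam q (rb q) / (B q : ℝ) else 0)
        = LamOut Q N lam q (rb q) := by
    intro q
    rw [Finset.sum_ite_mem, Finset.univ_inter, Finset.sum_const, hcard q, nsmul_eq_mul]
    have : (B q : ℝ) ≠ 0 := Nat.cast_ne_zero.2 (hB q).ne'
    field_simp
  rw [Finset.sum_congr rfl fun q _ => h1 q, div_self]
  exact ne_of_gt (Finset.sum_pos
    (fun q _ => lamOut_pos Q N lam hlam q (rb q) (by rw [hcard q]; exact hBN q))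
    Finset.univ_nonempty)

lemma piLoc_insert_erase (Q N : ℕ) (B : Fin Q → ℕ) (lam : Fin Q → Fin N → ℝ)
    (hlam : ∀ q n, 0 < lam q n) (q : Fin Q) (s : Finset (Fin N)) (R m : Fin N)
    (hR : R ∈ s) (hm : m ∉ s) :
    piLoc Q N B lam q (insert m (s.erase R)) = piLoc Q N B lam q s * (lam q m / lam q R) := by
  unfold piLoc
  rw [Finset.prod_insert (fun h => hm (Finset.mem_of_mem_erase h)),
    ← Finset.prod_erase_mul s (lam q) hR]
  have hR0 : lam q R ≠ 0 := (hlam q R).ne'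
  rw [div_mul_div_comm]
  have h2 : (∏ x ∈ s.erase R, lam q x) * lam q R * lam q m
      = (lam q m * ∏ x ∈ s.erase R, lam q x) * lam q R := by ring
  rw [h2, mul_div_mul_right _ _ hR0]

lemma prod_piLoc_update (Q N : ℕ) (B : Fin Q → ℕ) (lam : Fin Q → Fin N → ℝ)
    (hlam : ∀ q n, 0 < lam q n) (hBle : ∀ q, B q ≤ N)
    (rb : Fin Q → Finset (Fin N)) (q : Fin Q) (s : Finset (Fin N)) :
    (∏ q', piLoc Q N B lam q' (Function.update rb q s q'))
      = (∏ q', piLoc Q N B lam q' (rb q'))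
        * (piLoc Q N B lam q s / piLoc Q N B lam q (rb q)) := by
  rw [← Finset.mul_prod_erase Finset.univ
      (fun q' => piLoc Q N B lam q' (Function.update rb q s q')) (Finset.mem_univ q),
    ← Finset.mul_prod_erase Finset.univ
      (fun q' => piLoc Q N B lam q' (rb q')) (Finset.mem_univ q)]
  simp only [Function.update_self]
  rw [Finset.prod_congr rfl
    (fun x hx => by rw [Function.update_of_ne (Finset.ne_of_mem_erase hx)])]
  have h0 : piLoc Q N B lam q (rb q) ≠ 0 := (piLoc_pos Q N B lam hlam q (hBle q) (rb q)).ne'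
  field_simp

/-- The candidate invariant of the RE tree network with a size-1 Internet cache
satisfies the full balance equations of the joint Markov chain. -/
theorem re_network_full_balance (Q N : ℕ) (hQ : 0 < Q)
    (B : Fin Q → ℕ) (hB : ∀ q, 0 < B q) (hBN : ∀ q, B q < N)
    (lam : Fin Q → Fin N → ℝ) (hlam : ∀ q n, 0 < lam q n)
    (rb : Fin Q → Finset (Fin N)) (hrb : ∀ q, (rb q).card = B q) (R : Fin N) :
    piJoint Q N B lam rb R * (∑ q, ∑ m ∈ Finset.univ \ rb q, lam q m) =
      (∑ q, ∑ m ∈ Finset.univ \ rb q, ∑ n ∈ (rb q) ∩ {R},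
        piJoint Q N B lam (Function.update rb q (insert m ((rb q).erase n))) R *
          (lam q n / (B q : ℝ)))
      + ∑ q, ∑ m ∈ Finset.univ \ rb q, ∑ n ∈ (rb q) ∩ {R},
          ∑ l ∈ Finset.univ.erase R,
            piJoint Q N B lam (Function.update rb q (insert m ((rb q).erase n))) l *
              (lam q n / (B q : ℝ)) := by
  haveI : Nonempty (Fin Q) := ⟨⟨0, hQ⟩⟩
  have hT : 0 < ∑ q, LamOut Q N lam q (rb q) :=
    Finset.sum_pos
      (fun q _ => lamOut_pos Q N lam hlam q (rb q) (by rw [hrb q]; exact hBN q))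
      Finset.univ_nonempty
  set Pi0 := ∏ q', piLoc Q N B lam q' (rb q') with hPi0
  -- the key pointwise identity
  have key : ∀ q : Fin Q, ∀ m ∈ Finset.univ \ rb q, ∀ n ∈ rb q ∩ ({R} : Finset (Fin N)),
      piJoint Q N B lam (Function.update rb q (insert m ((rb q).erase n))) R *
          (lam q n / (B q : ℝ))
        + ∑ l ∈ Finset.univ.erase R,
            piJoint Q N B lam (Function.update rb q (insert m ((rb q).erase n))) l *
              (lam q n / (B q : ℝ))
      = Pi0 * (lam q m / (B q : ℝ)) := by
    intro q m hm n hn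
    rw [Finset.mem_sdiff] at hm
    rw [Finset.mem_inter, Finset.mem_singleton] at hn
    obtain ⟨hnmem, rfl⟩ := hn
    set rb' := Function.update rb q (insert m ((rb q).erase n)) with hrb'
    have hcard' : ∀ q', (rb' q').card = B q' := by
      intro q'
      rcases eq_or_ne q' q with rfl | hne
      · rw [hrb', Function.update_self,
          Finset.card_insert_of_notMem (fun h => hm.2 (Finset.mem_of_mem_erase h)),
          Finset.card_erase_of_mem hnmem, hrb q']
        have := hB q'; omega
      · rw [hrb', Function.update_of_ne hne]; exact hrb q'
    rw [← Finset.sum_mul, ← add_mul,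
      Finset.add_sum_erase Finset.univ (fun l => piJoint Q N B lam rb' l) (Finset.mem_univ n)]
    have hsum : (∑ l, piJoint Q N B lam rb' l) = ∏ q', piLoc Q N B lam q' (rb' q') := by
      unfold piJoint
      rw [← Finset.sum_mul, sum_piCond Q N hQ B lam hlam hB rb' hcard' hBN, one_mul]
    rw [hsum, hrb', prod_piLoc_update Q N B lam hlam (fun q => (hBN q).le) rb q _,
      piLoc_insert_erase Q N B lam hlam q (rb q) n m hnmem hm.2]
    have h0 : piLoc Q N B lam q (rb q) ≠ 0 :=
      (piLoc_pos Q N B lam hlam q (hBN q).le (rb q)).ne'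
    have hR0 : lam q n ≠ 0 := (hlam q n).ne'
    have hBq : (B q : ℝ) ≠ 0 := Nat.cast_ne_zero.2 (hB q).ne'
    field_simp
    ring
  -- simplify the RHS
  rw [← Finset.sum_add_distrib]
  have hRHS : ∀ q : Fin Q,
      ((∑ m ∈ Finset.univ \ rb q, ∑ n ∈ rb q ∩ {R},
          piJoint Q N B lam (Function.update rb q (insert m ((rb q).erase n))) R *
            (lam q n / (B q : ℝ)))
        + ∑ m ∈ Finset.univ \ rb q, ∑ n ∈ rb q ∩ {R},
            ∑ l ∈ Finset.univ.erase R,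
              piJoint Q N B lam (Function.update rb q (insert m ((rb q).erase n))) l *
                (lam q n / (B q : ℝ)))
      = if R ∈ rb q then Pi0 * (LamOut Q N lam q (rb q) / (B q : ℝ)) else 0 := by
    intro q
    have step : ((∑ m ∈ Finset.univ \ rb q, ∑ n ∈ rb q ∩ {R},
          piJoint Q N B lam (Function.update rb q (insert m ((rb q).erase n))) R *
            (lam q n / (B q : ℝ)))
        + ∑ m ∈ Finset.univ \ rb q, ∑ n ∈ rb q ∩ {R},
            ∑ l ∈ Finset.univ.erase R,
              piJoint Q N B lam (Function.update rb q (insert m ((rb q).erase n))) l *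
                (lam q n / (B q : ℝ)))
        = ∑ m ∈ Finset.univ \ rb q, ∑ n ∈ rb q ∩ {R}, Pi0 * (lam q m / (B q : ℝ)) := by
      rw [← Finset.sum_add_distrib]
      refine Finset.sum_congr rfl (fun m hm => ?_)
      rw [← Finset.sum_add_distrib]
      exact Finset.sum_congr rfl (fun n hn => key q m hm n hn)
    rw [step]
    by_cases hRq : R ∈ rb q
    · have hint : rb q ∩ ({R} : Finset (Fin N)) = {R} := by
        rw [Finset.inter_comm]
        exact Finset.singleton_inter_of_mem hRq
      simp only [hint, Finset.sum_singleton, if_pos hRq]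
      rw [← Finset.mul_sum, ← Finset.sum_div]
      rfl
    · have hint : rb q ∩ ({R} : Finset (Fin N)) = ∅ := by
        rw [Finset.inter_comm]
        exact Finset.singleton_inter_of_notMem hRq
      simp [hint, hRq]
  rw [Finset.sum_congr rfl (fun q _ => hRHS q)]
  have hTne : (∑ q, LamOut Q N lam q (rb q)) ≠ 0 := hT.ne'
  have hL : piJoint Q N B lam rb R * (∑ q, ∑ m ∈ Finset.univ \ rb q, lam q m)
      = Pi0 * ∑ q, (if R ∈ rb q then LamOut Q N lam q (rb q) / (B q : ℝ) else 0) := by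
    unfold piJoint piCond
    have hlo : ∀ q : Fin Q, (∑ m ∈ Finset.univ \ rb q, lam q m) = LamOut Q N lam q (rb q) :=
      fun q => rfl
    simp_rw [hlo]
    rw [hPi0]
    field_simp
  rw [hL, Finset.mul_sum]
  exact Finset.sum_congr rfl (fun q _ => by rw [mul_ite, mul_zero])
end

section
/- For the LRU invariant with B = 2, the stationary hit probability of object n is h_n = λ_n/Λ + Σ_{m ≠ n} λ_m λ_n/(Λ(Λ - λ_m)), and if λ_m > λ_n then h_m > h_n. -/
open Finset

/-- LRU hit probability of object `n` for cache size `B = 2`: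
`h_n = Σ_{(a,b) : n ∈ {a,b}} π(a,b)` with `π(a,b) = λ_a λ_b/(Λ(Λ-λ_a))`. -/
noncomputable def hitLRU2 (N : ℕ) (lam : Fin N → ℝ) (Λ : ℝ) (n : Fin N) : ℝ :=
  ∑ a : Fin N, ∑ b ∈ Finset.univ.erase a,
    if n = a ∨ n = b then lam a * lam b / (Λ * (Λ - lam a)) else 0

/-!
Summing `π` over the states with `n` in front gives `λ_n/Λ`, because `Σ_{b ≠ n} λ_b = Λ - λ_n`;
the states with `n` behind give the remaining sum. For `λ_n < λ_m`, the terms of `h_m` and `h_n`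
indexed by a third object `k` (there is one as `N ≥ 3`) differ by the factor `λ_m/λ_n > 1`, and the
remaining parts `λ_m/Λ + π(n,m)` of `h_m` and `λ_n/Λ + π(m,n)` of `h_n` differ by
`(λ_m - λ_n)(Λ - λ_m - λ_n)/((Λ - λ_m)(Λ - λ_n)) ≥ 0`.
-/

theorem div_add_mul_div_le_div_add_mul_div {a b Λ : ℝ} (ha : 0 < a) (hab : a ≤ b)
    (hΛ : a + b ≤ Λ) :
    a / Λ + b * a / (Λ * (Λ - b)) ≤ b / Λ + a * b / (Λ * (Λ - a)) := by
  have hΛa : 0 < Λ - a := by linarith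
  have hΛb : 0 < Λ - b := by linarith
  have hΛ0 : 0 < Λ := by linarith
  have key : b / Λ + a * b / (Λ * (Λ - a)) - (a / Λ + b * a / (Λ * (Λ - b))) =
      (b - a) * (Λ - a - b) / ((Λ - a) * (Λ - b)) := by
    field_simp
    ring
  have : 0 ≤ (b - a) * (Λ - a - b) / ((Λ - a) * (Λ - b)) := by
    apply div_nonneg <;> nlinarith
  linarith

section

variable {ι : Type*} [Fintype ι] {lam : ι → ℝ} {Λ : ℝ}

theorem sub_pos_of_nontrivial [Nontrivial ι] (hlam : ∀ i, 0 < lam i) (hΛ : Λ = ∑ i, lam i)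
    (n : ι) :
    0 < Λ - lam n := by
  obtain ⟨j, hj⟩ := exists_ne n
  rw [hΛ, sub_pos]
  exact single_lt_sum hj (mem_univ n) (mem_univ j) (hlam j) fun k _ _ => (hlam k).le

variable [DecidableEq ι]

theorem sum_sum_erase_ite_eq_or_eq {M : Type*} [AddCommMonoid M] (f : ι → ι → M) (n : ι) :
    ∑ a, ∑ b ∈ univ.erase a, (if n = a ∨ n = b then f a b else 0) =
      ∑ b ∈ univ.erase n, f n b + ∑ a ∈ univ.erase n, f a n := by
  rw [← add_sum_erase univ _ (mem_univ n)]
  congr 1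
  · exact sum_congr rfl fun b _ => if_pos (Or.inl rfl)
  · refine sum_congr rfl fun a ha => ?_
    have hna : n ≠ a := (ne_of_mem_erase ha).symm
    simp only [hna, false_or]
    rw [sum_ite_eq, if_pos (mem_erase.2 ⟨hna, mem_univ n⟩)]

theorem sum_erase_mul_div_eq_div (hΛ : Λ = ∑ i, lam i) {n : ι} (hn : Λ - lam n ≠ 0) :
    ∑ b ∈ univ.erase n, lam n * lam b / (Λ * (Λ - lam n)) = lam n / Λ := by
  rw [← sum_div, ← mul_sum, sum_erase_eq_sub (mem_univ n), ← hΛ, mul_div_mul_right _ _ hn]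

theorem div_add_sum_erase_lt (hlam : ∀ i, 0 < lam i) (hΛ : Λ = ∑ i, lam i) {m n k : ι}
    (hmn : lam n < lam m) (hkm : k ≠ m) (hkn : k ≠ n) :
    lam n / Λ + ∑ j ∈ univ.erase n, lam j * lam n / (Λ * (Λ - lam j)) <
      lam m / Λ + ∑ j ∈ univ.erase m, lam j * lam m / (Λ * (Λ - lam j)) := by
  have : Nontrivial ι := ⟨⟨k, m, hkm⟩⟩
  have hne : m ≠ n := fun h => hmn.ne (congrArg lam h).symm
  have hpair : lam n + lam m ≤ Λ :=
    hΛ ▸ add_le_sum (fun i _ => (hlam i).le) (mem_univ n) (mem_univ m) hne.symm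
  have hrest : ∑ j ∈ (univ.erase n).erase m, lam j * lam n / (Λ * (Λ - lam j)) <
      ∑ j ∈ (univ.erase n).erase m, lam j * lam m / (Λ * (Λ - lam j)) := by
    refine sum_lt_sum_of_nonempty ⟨k, by simp [hkm, hkn]⟩ fun j _ => ?_
    have hΛ0 : 0 < Λ := (sub_pos_of_nontrivial hlam hΛ j).trans (sub_lt_self _ (hlam j))
    gcongr
    · exact mul_pos hΛ0 (sub_pos_of_nontrivial hlam hΛ j)
    · exact hlam j
  rw [← add_sum_erase _ _ (mem_erase.2 ⟨hne, mem_univ m⟩),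
    ← add_sum_erase _ _ (mem_erase.2 ⟨hne.symm, mem_univ n⟩), erase_right_comm (a := m)]
  linarith [div_add_mul_div_le_div_add_mul_div (hlam n) hmn.le hpair]

end

theorem hitLRU2_eq {N : ℕ} {lam : Fin N → ℝ} {Λ : ℝ} (hΛ : Λ = ∑ i, lam i) {n : Fin N}
    (hn : Λ - lam n ≠ 0) :
    hitLRU2 N lam Λ n =
      lam n / Λ + ∑ m ∈ univ.erase n, lam m * lam n / (Λ * (Λ - lam m)) := by
  rw [hitLRU2, sum_sum_erase_ite_eq_or_eq (fun a b => lam a * lam b / (Λ * (Λ - lam a))),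
    sum_erase_mul_div_eq_div hΛ hn]

/-- For the LRU invariant with `B = 2`, the stationary hit probability is
`h_n = λ_n/Λ + Σ_{m≠n} λ_m λ_n/(Λ(Λ-λ_m))`, and it is strictly increasing in
popularity: `λ_n < λ_m` implies `h_n < h_m`. -/
theorem lru_B2_hit_prob (N : ℕ) (hN : 3 ≤ N)
    (lam : Fin N → ℝ) (hlam : ∀ n, 0 < lam n)
    (Λ : ℝ) (hΛ : Λ = ∑ i, lam i) :
    (∀ n : Fin N, hitLRU2 N lam Λ n =
        lam n / Λ + ∑ m ∈ Finset.univ.erase n, lam m * lam n / (Λ * (Λ - lam m))) ∧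
      (∀ m n : Fin N, lam n < lam m → hitLRU2 N lam Λ n < hitLRU2 N lam Λ m) := by
  have : Nontrivial (Fin N) := Fin.nontrivial_iff_two_le.2 (by omega)
  have hformula : ∀ n, hitLRU2 N lam Λ n =
      lam n / Λ + ∑ m ∈ univ.erase n, lam m * lam n / (Λ * (Λ - lam m)) :=
    fun n => hitLRU2_eq hΛ (sub_pos_of_nontrivial hlam hΛ n).ne'
  refine ⟨hformula, fun m n hmn => ?_⟩
  obtain ⟨k, hk, hkn⟩ : ∃ k ∈ univ.erase m, k ≠ n :=
    exists_mem_ne (by rw [card_erase_of_mem (mem_univ m), card_univ, Fintype.card_fin]; omega) n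
  rw [hformula, hformula]
  exact div_add_sum_erase_lt hlam hΛ hmn (ne_of_mem_erase hk) hkn
end
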